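/- arXiv:2007.14384 — 2 statements merged into one kernel-verified Lean document; each statement's English description precedes it below -/
import Mathlib

section
/- Let N be a linear map on n-qubit operators that fixes the identity and acts on each non-identity Pauli string σᵢ by N(σᵢ) = cᵢσᵢ with |cᵢ| ≤ q for some 0 ≤ q < 1. If ρ has Pauli coefficient vector a⃗ and N(ρ) has coefficient vector a⃗′, then ‖a⃗′‖₂ ≤ q‖a⃗‖₂. More generally, after k applications of such channels interleaved with unitary conjugations, the coefficient vector satisfies ‖a⃗^(k)‖₂ ≤ qᵏ‖a⃗^(0)‖₂. -/
open Matrix BigOperators ComplexOrder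

/-! The trace pairing `(M, σ j) ↦ tr (M σ j)` reads off the coefficients of an expansion in the
orthogonal family `σ`, so the channel multiplies the coefficient vector entrywise by `c`.
An entrywise multiplier bounded by `q` shrinks the Euclidean norm by `q`, and iterating gives `qᵏ`. -/

section Contraction

variable {ι : Type*} [Fintype ι] {q : ℝ}

lemma sqrt_sum_sq_mul_le (hq : 0 ≤ q) {e : ι → ℝ} (he : ∀ i, |e i| ≤ q) (x : ι → ℝ) :
    Real.sqrt (∑ i, (e i * x i) ^ 2) ≤ q * Real.sqrt (∑ i, x i ^ 2) := by
  have hsum : ∑ i, (e i * x i) ^ 2 ≤ q ^ 2 * ∑ i, x i ^ 2 := by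
    rw [Finset.mul_sum]
    refine Finset.sum_le_sum fun i _ => ?_
    rw [mul_pow]
    have he2 : e i ^ 2 ≤ q ^ 2 := sq_le_sq' (abs_le.mp (he i)).1 (abs_le.mp (he i)).2
    exact mul_le_mul_of_nonneg_right he2 (sq_nonneg _)
  calc Real.sqrt (∑ i, (e i * x i) ^ 2) ≤ Real.sqrt (q ^ 2 * ∑ i, x i ^ 2) :=
        Real.sqrt_le_sqrt hsum
    _ = q * Real.sqrt (∑ i, x i ^ 2) := by
        rw [Real.sqrt_mul (sq_nonneg q), Real.sqrt_sq hq]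

lemma sqrt_sum_sq_le_pow_mul (hq : 0 ≤ q) {k : ℕ} {b : ℕ → ι → ℝ}
    (hstep : ∀ j < k, ∃ e : ι → ℝ, (∀ i, |e i| ≤ q) ∧
      ∑ i, (b (j + 1) i) ^ 2 = ∑ i, (e i * b j i) ^ 2) :
    Real.sqrt (∑ i, (b k i) ^ 2) ≤ q ^ k * Real.sqrt (∑ i, (b 0 i) ^ 2) := by
  induction k with
  | zero => simp
  | succ m ih =>
    obtain ⟨e, he, heq⟩ := hstep m m.lt_succ_self
    calc Real.sqrt (∑ i, (b (m + 1) i) ^ 2)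
        = Real.sqrt (∑ i, (e i * b m i) ^ 2) := by rw [heq]
      _ ≤ q * Real.sqrt (∑ i, (b m i) ^ 2) := sqrt_sum_sq_mul_le hq he (b m)
      _ ≤ q * (q ^ m * Real.sqrt (∑ i, (b 0 i) ^ 2)) :=
          mul_le_mul_of_nonneg_left (ih fun j hj => hstep j (hj.trans m.lt_succ_self)) hq
      _ = q ^ (m + 1) * Real.sqrt (∑ i, (b 0 i) ^ 2) := by ring

end Contraction

section OrthogonalExpansion

variable {K m ι : Type*} [Field K] [DecidableEq m] [Fintype ι] {σ : ι → Matrix m m K}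

lemma map_smul_one_add_sum_smul (N : Matrix m m K →ₗ[K] Matrix m m K) {c : ι → K}
    (hN1 : N 1 = 1) (hNσ : ∀ i, N (σ i) = c i • σ i) (s : K) (d : ι → K) :
    N (s • (1 + ∑ i, d i • σ i)) = s • (1 + ∑ i, (c i * d i) • σ i) := by
  simp [map_sum, hN1, hNσ, smul_smul, mul_comm]

variable [Fintype m] [DecidableEq ι] {D : K}

lemma trace_sum_smul_mul_of_orthogonal
    (horth : ∀ i j, (σ i * σ j).trace = if i = j then D else 0) (d : ι → K) (j : ι) :
    ((∑ i, d i • σ i) * σ j).trace = d j * D := by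
  simp [Finset.sum_mul, trace_sum, trace_smul, horth]

lemma coeff_eq_of_smul_one_add_sum_eq
    (horth : ∀ i j, (σ i * σ j).trace = if i = j then D else 0) (hD : D ≠ 0)
    {s : K} (hs : s ≠ 0) {d d' : ι → K}
    (h : s • (1 + ∑ i, d i • σ i) = s • (1 + ∑ i, d' i • σ i)) : d = d' := by
  have hsum : ∑ i, d i • σ i = ∑ i, d' i • σ i :=
    add_left_cancel (smul_right_injective _ hs h)
  funext j
  have htr := congrArg (fun M => (M * σ j).trace) hsum
  simp only [trace_sum_smul_mul_of_orthogonal horth] at htr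
  exact mul_right_cancel₀ hD htr

end OrthogonalExpansion

theorem stmt_2_general {n : ℕ} {ι : Type*} [Fintype ι] [DecidableEq ι]
    (q : ℝ) (hq0 : 0 ≤ q)
    (σ : ι → Matrix (Fin (2^n)) (Fin (2^n)) ℂ)
    (horth : ∀ i j, (σ i * σ j).trace = if i = j then ((2^n : ℕ) : ℂ) else 0)
    (N : Matrix (Fin (2^n)) (Fin (2^n)) ℂ →ₗ[ℂ] Matrix (Fin (2^n)) (Fin (2^n)) ℂ)
    (c : ι → ℝ) (hN1 : N 1 = 1) (hNσ : ∀ i, N (σ i) = (c i : ℂ) • σ i)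
    (hc : ∀ i, |c i| ≤ q)
    (ρ : Matrix (Fin (2^n)) (Fin (2^n)) ℂ) (a a' : ι → ℝ)
    (hρ : ρ = (((2^n : ℕ) : ℂ))⁻¹ • ((1 : Matrix (Fin (2^n)) (Fin (2^n)) ℂ)
        + ∑ i, (a i : ℂ) • σ i))
    (hρ' : N ρ = (((2^n : ℕ) : ℂ))⁻¹ • ((1 : Matrix (Fin (2^n)) (Fin (2^n)) ℂ)
        + ∑ i, (a' i : ℂ) • σ i))
    -- a sequence of coefficient vectors, each step being Pauli noise with
    -- factors of magnitude at most `q` followed by a (norm-preserving)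
    -- unitary conjugation
    (k : ℕ) (b : ℕ → ι → ℝ)
    (hstep : ∀ j < k, ∃ e : ι → ℝ, (∀ i, |e i| ≤ q) ∧
      ∑ i, (b (j+1) i)^2 = ∑ i, (e i * b j i)^2) :
    Real.sqrt (∑ i, (a' i)^2) ≤ q * Real.sqrt (∑ i, (a i)^2)
    ∧ Real.sqrt (∑ i, (b k i)^2) ≤ q^k * Real.sqrt (∑ i, (b 0 i)^2) := by
  have hdim : ((2^n : ℕ) : ℂ) ≠ 0 := by exact_mod_cast (pow_pos two_pos n).ne'
  have hcoeff : (fun i => (a' i : ℂ)) = fun i => (c i : ℂ) * a i := by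
    refine coeff_eq_of_smul_one_add_sum_eq horth hdim (inv_ne_zero hdim) ?_
    rw [← hρ', hρ, map_smul_one_add_sum_smul N hN1 hNσ]
  have ha' : ∀ i, a' i = c i * a i := fun i => by exact_mod_cast congrFun hcoeff i
  refine ⟨?_, sqrt_sum_sq_le_pow_mul hq0 hstep⟩
  simpa only [ha'] using sqrt_sum_sq_mul_le hq0 hc a

/-- A Pauli noise channel (fixing the identity and scaling each non-identity
Pauli string by a factor of magnitude at most `q`) contracts the Pauli
coefficient vector of a state by a factor `q`; more generally, `k`
applications of such channels interleaved with unitary conjugations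
(which preserve the 2-norm of the coefficient vector) contract it by `qᵏ`. -/
theorem stmt_2 {n : ℕ} {ι : Type*} [Fintype ι] [DecidableEq ι]
    (q : ℝ) (hq0 : 0 ≤ q) (hq1 : q < 1)
    (σ : ι → Matrix (Fin (2^n)) (Fin (2^n)) ℂ)
    (hherm : ∀ i, (σ i).IsHermitian)
    (htraceless : ∀ i, (σ i).trace = 0)
    (horth : ∀ i j, (σ i * σ j).trace = if i = j then ((2^n : ℕ) : ℂ) else 0)
    (N : Matrix (Fin (2^n)) (Fin (2^n)) ℂ →ₗ[ℂ] Matrix (Fin (2^n)) (Fin (2^n)) ℂ)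
    (c : ι → ℝ) (hN1 : N 1 = 1) (hNσ : ∀ i, N (σ i) = (c i : ℂ) • σ i)
    (hc : ∀ i, |c i| ≤ q)
    (ρ : Matrix (Fin (2^n)) (Fin (2^n)) ℂ) (a a' : ι → ℝ)
    (hρ : ρ = (((2^n : ℕ) : ℂ))⁻¹ • ((1 : Matrix (Fin (2^n)) (Fin (2^n)) ℂ)
        + ∑ i, (a i : ℂ) • σ i))
    (hρ' : N ρ = (((2^n : ℕ) : ℂ))⁻¹ • ((1 : Matrix (Fin (2^n)) (Fin (2^n)) ℂ)
        + ∑ i, (a' i : ℂ) • σ i))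
    -- a sequence of coefficient vectors, each step being Pauli noise with
    -- factors of magnitude at most `q` followed by a (norm-preserving)
    -- unitary conjugation
    (k : ℕ) (b : ℕ → ι → ℝ)
    (hstep : ∀ j < k, ∃ e : ι → ℝ, (∀ i, |e i| ≤ q) ∧
      ∑ i, (b (j+1) i)^2 = ∑ i, (e i * b j i)^2) :
    Real.sqrt (∑ i, (a' i)^2) ≤ q * Real.sqrt (∑ i, (a i)^2)
    ∧ Real.sqrt (∑ i, (b k i)^2) ≤ q^k * Real.sqrt (∑ i, (b 0 i)^2) :=
  stmt_2_general q hq0 σ horth N c hN1 hNσ hc ρ a a' hρ hρ' k b hstep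
end

section
/- (Concentration of the noisy cost.) Consider an n-qubit circuit consisting of L unitary layers, with a Pauli noise channel of strength q (each non-identity Pauli coefficient is multiplied by a factor of magnitude ≤ q) applied before and after each layer, acting on a pure input state ρ₀. Let O = Σᵢωᵢσᵢ be an observable with N_O nonzero Pauli coefficients (no identity component, after subtracting Tr[O]/2ⁿ·I), and let C̃ = Tr[O ρ_out] be the output expectation value. Then |C̃ − Tr[O]/2ⁿ| ≤ N_O ‖ω⃗‖∞ · 2^{n/2} q^{L+1}. -/
/-!
Write `Φ(s) = ∑ᵢ |Tr(σᵢ s)|²` for the squared 2-norm of the Pauli coefficient vector of `s`.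
Because `1` and the `σᵢ` form a trace-orthogonal basis, Parseval gives
`Φ(s) = 2ⁿ Tr(s s†) - |Tr s|²`; hence `Φ` is invariant under unitary conjugation and equals
`2ⁿ - 1` on a pure state, while a noise channel that is diagonal in the Pauli basis scales the
`i`-th coefficient by `cᵢ` and so contracts `Φ` by `q²`. After the `L + 1` noise layers
`Φ(ρ_out) ≤ q^(2(L+1)) 2ⁿ`, which bounds every `|Tr(σᵢ ρ_out)|` by `2^(n/2) q^(L+1)`; since `O` is
traceless, `Tr(O ρ_out) = ∑ ωᵢ Tr(σᵢ ρ_out)` has at most `N_O` nonzero terms.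
-/

open Matrix BigOperators ComplexOrder

/-- The output of a noisy layered circuit: the noise channel `Nc` is applied
before and after each unitary layer, i.e. `𝒩 ∘ 𝒰_L ∘ ⋯ ∘ 𝒩 ∘ 𝒰_1 ∘ 𝒩`. -/
noncomputable def runCircuit {d : ℕ}
    (Nc : Matrix (Fin d) (Fin d) ℂ →ₗ[ℂ] Matrix (Fin d) (Fin d) ℂ)
    (Us : List (Matrix (Fin d) (Fin d) ℂ)) (ρ : Matrix (Fin d) (Fin d) ℂ) :
    Matrix (Fin d) (Fin d) ℂ :=
  Us.foldl (fun s V => Nc (V * s * Vᴴ)) (Nc ρ)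

section PauliBasis

variable {m ι : Type*} [Fintype m] [Fintype ι]

noncomputable def pauliNormSq (σ : ι → Matrix m m ℂ) (s : Matrix m m ℂ) : ℝ :=
  ∑ i, Complex.normSq (σ i * s).trace

theorem norm_trace_mul_le_sqrt_pauliNormSq (σ : ι → Matrix m m ℂ) (s : Matrix m m ℂ) (i : ι) :
    ‖(σ i * s).trace‖ ≤ √(pauliNormSq σ s) :=
  Real.sqrt_le_sqrt <| Finset.single_le_sum (f := fun j => Complex.normSq (σ j * s).trace)
    (fun _ _ => Complex.normSq_nonneg _) (Finset.mem_univ i)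

variable [DecidableEq ι]

structure IsPauliBasis (σ : ι → Matrix m m ℂ) : Prop where
  card_add_one : Fintype.card ι + 1 = Fintype.card m ^ 2
  trace_eq_zero : ∀ i, (σ i).trace = 0
  trace_mul : ∀ i j, (σ i * σ j).trace = if i = j then (Fintype.card m : ℂ) else 0

namespace IsPauliBasis

variable {σ : ι → Matrix m m ℂ}

theorem card_ne_zero (hσ : IsPauliBasis σ) : Fintype.card m ≠ 0 := by
  rintro h
  simpa [h] using hσ.card_add_one

variable [DecidableEq m]

theorem linearIndependent (hσ : IsPauliBasis σ) :
    LinearIndependent ℂ (fun k : Option ι => k.elim 1 σ) := by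
  rw [Fintype.linearIndependent_iff]
  intro a ha k
  cases k with
  | none =>
    have h := congrArg Matrix.trace ha
    simp [Fintype.sum_option, Matrix.trace_sum, hσ.trace_eq_zero] at h
    exact h.resolve_right hσ.card_ne_zero
  | some i =>
    have h := congrArg (fun x => (σ i * x).trace) ha
    simp only [Fintype.sum_option, Option.elim, Matrix.mul_add, Matrix.mul_sum, Matrix.mul_smul,
      Matrix.trace_add, Matrix.trace_sum, Matrix.trace_smul, Matrix.mul_one, hσ.trace_eq_zero,
      hσ.trace_mul, smul_eq_mul, mul_ite, mul_zero, Finset.sum_ite_eq, Finset.mem_univ,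
      if_true, zero_add, Matrix.trace_zero] at h
    exact (mul_eq_zero.mp h).resolve_right (Nat.cast_ne_zero.mpr hσ.card_ne_zero)

theorem span_eq_top (hσ : IsPauliBasis σ) :
    Submodule.span ℂ (Set.range (fun k : Option ι => k.elim 1 σ)) = ⊤ :=
  hσ.linearIndependent.span_eq_top_of_card_eq_finrank <| by
    simp [Module.finrank_matrix, hσ.card_add_one, sq]

theorem linearMap_ext {W : Type*} [AddCommGroup W] [Module ℂ W] (hσ : IsPauliBasis σ)
    {f g : Matrix m m ℂ →ₗ[ℂ] W} (h1 : f 1 = g 1) (hσfg : ∀ i, f (σ i) = g (σ i)) : f = g :=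
  LinearMap.ext_on_range hσ.span_eq_top fun k => by cases k <;> simp [h1, hσfg]

theorem sum_trace_mul_smul (hσ : IsPauliBasis σ) (s : Matrix m m ℂ) :
    ∑ i, (σ i * s).trace • σ i = (Fintype.card m : ℂ) • s - s.trace • 1 := by
  have h := hσ.linearMap_ext
    (f := ∑ i, (traceLinearMap m ℂ ℂ ∘ₗ LinearMap.mulLeft ℂ (σ i)).smulRight (σ i))
    (g := (Fintype.card m : ℂ) • LinearMap.id - (traceLinearMap m ℂ ℂ).smulRight 1)
    (by simp [hσ.trace_eq_zero]) (fun j => by simp [hσ.trace_mul, hσ.trace_eq_zero])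
  simpa using LinearMap.congr_fun h s

theorem trace_mul_apply_of_diagonal (hσ : IsPauliBasis σ) {Nc : Matrix m m ℂ →ₗ[ℂ] Matrix m m ℂ}
    {c : ι → ℂ} (hN1 : Nc 1 = 1) (hNσ : ∀ i, Nc (σ i) = c i • σ i) (i : ι) (s : Matrix m m ℂ) :
    (σ i * Nc s).trace = c i * (σ i * s).trace := by
  have h := hσ.linearMap_ext
    (f := (traceLinearMap m ℂ ℂ ∘ₗ LinearMap.mulLeft ℂ (σ i)) ∘ₗ Nc)
    (g := c i • (traceLinearMap m ℂ ℂ ∘ₗ LinearMap.mulLeft ℂ (σ i)))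
    (by simp [hN1, hσ.trace_eq_zero]) fun j => by by_cases hij : i = j <;> simp [hNσ j, hσ.trace_mul, hij]
  simpa using LinearMap.congr_fun h s

theorem pauliNormSq_apply_le (hσ : IsPauliBasis σ) {Nc : Matrix m m ℂ →ₗ[ℂ] Matrix m m ℂ}
    {c : ι → ℂ} (hN1 : Nc 1 = 1) (hNσ : ∀ i, Nc (σ i) = c i • σ i) {q : ℝ}
    (hc : ∀ i, ‖c i‖ ≤ q) (s : Matrix m m ℂ) :
    pauliNormSq σ (Nc s) ≤ q ^ 2 * pauliNormSq σ s := by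
  rw [pauliNormSq, pauliNormSq, Finset.mul_sum]
  refine Finset.sum_le_sum fun i _ => ?_
  rw [hσ.trace_mul_apply_of_diagonal hN1 hNσ, Complex.normSq_mul, Complex.normSq_eq_norm_sq]
  exact mul_le_mul_of_nonneg_right (pow_le_pow_left₀ (norm_nonneg _) (hc i) 2)
    (Complex.normSq_nonneg _)

theorem ofReal_pauliNormSq (hσ : IsPauliBasis σ) (hherm : ∀ i, (σ i).IsHermitian)
    (s : Matrix m m ℂ) :
    (pauliNormSq σ s : ℂ) = Fintype.card m * (s * sᴴ).trace - s.trace * star s.trace := by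
  have hconj : ∀ i, star (σ i * s).trace = (σ i * sᴴ).trace := fun i => by
    rw [← Matrix.trace_conjTranspose, Matrix.conjTranspose_mul, (hherm i).eq,
      Matrix.trace_mul_comm]
  calc (pauliNormSq σ s : ℂ) = ∑ i, (σ i * s).trace * (σ i * sᴴ).trace := by
        simp only [pauliNormSq, Complex.ofReal_sum, ← Complex.mul_conj, ← hconj]
        rfl
    _ = ((∑ i, (σ i * s).trace • σ i) * sᴴ).trace := by
        simp [Finset.sum_mul, Matrix.trace_sum, Matrix.trace_smul]
    _ = _ := by
        rw [hσ.sum_trace_mul_smul]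
        simp [Matrix.sub_mul, Matrix.trace_sub, Matrix.trace_smul]

theorem pauliNormSq_unitary_conj (hσ : IsPauliBasis σ) (hherm : ∀ i, (σ i).IsHermitian)
    {V : Matrix m m ℂ} (hV : V ∈ unitaryGroup m ℂ) (s : Matrix m m ℂ) :
    pauliNormSq σ (V * s * Vᴴ) = pauliNormSq σ s := by
  have hVV : Vᴴ * V = 1 := Unitary.star_mul_self_of_mem hV
  have htrace : ∀ t, (V * t * Vᴴ).trace = t.trace := fun t => by
    rw [Matrix.trace_mul_comm, ← Matrix.mul_assoc, hVV, Matrix.one_mul]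
  have hsq : (V * s * Vᴴ) * (V * s * Vᴴ)ᴴ = V * (s * sᴴ) * Vᴴ := by
    simp only [Matrix.conjTranspose_mul, Matrix.conjTranspose_conjTranspose, Matrix.mul_assoc]
    rw [← Matrix.mul_assoc Vᴴ V, hVV, Matrix.one_mul]
  apply Complex.ofReal_injective
  rw [hσ.ofReal_pauliNormSq hherm, hσ.ofReal_pauliNormSq hherm, hsq, htrace, htrace]

theorem pauliNormSq_of_pure (hσ : IsPauliBasis σ) (hherm : ∀ i, (σ i).IsHermitian)
    {ρ : Matrix m m ℂ} (hρ : ρ.IsHermitian) (htr : ρ.trace = 1) (hpure : (ρ * ρ).trace = 1) :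
    pauliNormSq σ ρ = Fintype.card m - 1 := by
  apply Complex.ofReal_injective
  rw [hσ.ofReal_pauliNormSq hherm, hρ.eq, hpure, htr]
  simp

theorem pauliNormSq_foldl_le (hσ : IsPauliBasis σ) (hherm : ∀ i, (σ i).IsHermitian)
    {Nc : Matrix m m ℂ →ₗ[ℂ] Matrix m m ℂ} {r : ℝ} (hr : 0 ≤ r)
    (hNc : ∀ s, pauliNormSq σ (Nc s) ≤ r * pauliNormSq σ s) {Us : List (Matrix m m ℂ)}
    (hUs : ∀ V ∈ Us, V ∈ unitaryGroup m ℂ) (s : Matrix m m ℂ) :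
    pauliNormSq σ (Us.foldl (fun s V => Nc (V * s * Vᴴ)) s) ≤ r ^ Us.length * pauliNormSq σ s := by
  induction Us generalizing s with
  | nil => simp
  | cons V Us ih =>
    have hV := hUs V List.mem_cons_self
    calc pauliNormSq σ (Us.foldl (fun s V => Nc (V * s * Vᴴ)) (Nc (V * s * Vᴴ)))
        ≤ r ^ Us.length * pauliNormSq σ (Nc (V * s * Vᴴ)) :=
          ih (fun W hW => hUs W (List.mem_cons_of_mem _ hW)) _
      _ ≤ r ^ Us.length * (r * pauliNormSq σ s) := by
          rw [← hσ.pauliNormSq_unitary_conj hherm hV s]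
          exact mul_le_mul_of_nonneg_left (hNc _) (pow_nonneg hr _)
      _ = r ^ (V :: Us).length * pauliNormSq σ s := by
          rw [List.length_cons]; ring

end IsPauliBasis
end PauliBasis

theorem IsPauliBasis.pauliNormSq_runCircuit_le {d : ℕ} {ι : Type*} [Fintype ι] [DecidableEq ι]
    {σ : ι → Matrix (Fin d) (Fin d) ℂ} (hσ : IsPauliBasis σ) (hherm : ∀ i, (σ i).IsHermitian)
    {Nc : Matrix (Fin d) (Fin d) ℂ →ₗ[ℂ] Matrix (Fin d) (Fin d) ℂ} {r : ℝ} (hr : 0 ≤ r)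
    (hNc : ∀ s, pauliNormSq σ (Nc s) ≤ r * pauliNormSq σ s) {Us : List (Matrix (Fin d) (Fin d) ℂ)}
    (hUs : ∀ V ∈ Us, V ∈ unitaryGroup (Fin d) ℂ) (ρ : Matrix (Fin d) (Fin d) ℂ) :
    pauliNormSq σ (runCircuit Nc Us ρ) ≤ r ^ (Us.length + 1) * pauliNormSq σ ρ :=
  calc pauliNormSq σ (runCircuit Nc Us ρ) ≤ r ^ Us.length * pauliNormSq σ (Nc ρ) :=
        hσ.pauliNormSq_foldl_le hherm hr hNc hUs _
    _ ≤ r ^ Us.length * (r * pauliNormSq σ ρ) := mul_le_mul_of_nonneg_left (hNc ρ) (pow_nonneg hr _)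
    _ = r ^ (Us.length + 1) * pauliNormSq σ ρ := by ring

theorem norm_sum_ofReal_mul_le {ι : Type*} [Fintype ι] (ω : ι → ℝ) (t : ι → ℂ) {B : ℝ}
    (ht : ∀ i, ‖t i‖ ≤ B) :
    ‖∑ i, (ω i : ℂ) * t i‖ ≤ ((Finset.univ.filter (fun i => ω i ≠ 0)).card : ℝ)
        * (⨆ i, |ω i|) * B := by
  have hsup : 0 ≤ ⨆ i, |ω i| := Real.iSup_nonneg fun i => abs_nonneg _
  rw [← Finset.sum_filter_of_ne (p := fun i => ω i ≠ 0) fun i _ h hω => h (by simp [hω])]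
  calc ‖∑ i ∈ Finset.univ.filter (fun i => ω i ≠ 0), (ω i : ℂ) * t i‖
      ≤ ∑ i ∈ Finset.univ.filter (fun i => ω i ≠ 0), |ω i| * ‖t i‖ := by
        simpa using norm_sum_le (Finset.univ.filter (fun i => ω i ≠ 0)) fun i => (ω i : ℂ) * t i
    _ ≤ ∑ i ∈ Finset.univ.filter (fun i => ω i ≠ 0), (⨆ i, |ω i|) * B :=
        Finset.sum_le_sum fun i _ => mul_le_mul (le_ciSup (f := fun i => |ω i|) (Finite.bddAbove_range _) i) (ht i)
          (norm_nonneg _) hsup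
    _ = _ := by rw [Finset.sum_const, nsmul_eq_mul, mul_assoc]

theorem stmt_7_general {n : ℕ} {ι : Type*} [Fintype ι] [DecidableEq ι]
    (hcard : Fintype.card ι = 4^n - 1)
    (σ : ι → Matrix (Fin (2^n)) (Fin (2^n)) ℂ)
    (hherm : ∀ i, (σ i).IsHermitian)
    (htraceless : ∀ i, (σ i).trace = 0)
    (horth : ∀ i j, (σ i * σ j).trace = if i = j then ((2^n : ℕ) : ℂ) else 0)
    (q : ℝ) (hq0 : 0 ≤ q)
    (Nc : Matrix (Fin (2^n)) (Fin (2^n)) ℂ →ₗ[ℂ] Matrix (Fin (2^n)) (Fin (2^n)) ℂ)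
    (c : ι → ℝ) (hN1 : Nc 1 = 1) (hNσ : ∀ i, Nc (σ i) = (c i : ℂ) • σ i)
    (hc : ∀ i, |c i| ≤ q)
    (Us : List (Matrix (Fin (2^n)) (Fin (2^n)) ℂ))
    (hUs : ∀ V ∈ Us, V ∈ Matrix.unitaryGroup (Fin (2^n)) ℂ)
    (ρ₀ : Matrix (Fin (2^n)) (Fin (2^n)) ℂ)
    (hρ₀psd : ρ₀.PosSemidef) (hρ₀tr : ρ₀.trace = 1)
    (hρ₀pure : (ρ₀ * ρ₀).trace = 1)
    (ω : ι → ℝ) (O : Matrix (Fin (2^n)) (Fin (2^n)) ℂ)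
    (hO : O = ∑ i, (ω i : ℂ) • σ i) :
    ‖(O * runCircuit Nc Us ρ₀).trace - O.trace / ((2^n : ℕ) : ℂ)‖
      ≤ ((Finset.univ.filter (fun i => ω i ≠ 0)).card : ℝ)
        * (⨆ i, |ω i|) * Real.sqrt (2^n) * q ^ (Us.length + 1) := by
  have hσ : IsPauliBasis σ := by
    refine ⟨?_, htraceless, fun i j => by simpa using horth i j⟩
    rw [hcard, Fintype.card_fin, ← pow_mul, mul_comm, pow_mul]
    exact Nat.sub_add_cancel (Nat.one_le_pow _ _ (by norm_num))
  have hnoise (s) : pauliNormSq σ (Nc s) ≤ q ^ 2 * pauliNormSq σ s :=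
    hσ.pauliNormSq_apply_le hN1 hNσ (fun i => by simpa using hc i) s
  have hout : pauliNormSq σ (runCircuit Nc Us ρ₀) ≤ (q ^ (Us.length + 1)) ^ 2 * 2 ^ n :=
    calc _ ≤ (q ^ 2) ^ (Us.length + 1) * pauliNormSq σ ρ₀ :=
          hσ.pauliNormSq_runCircuit_le hherm (sq_nonneg q) hnoise hUs ρ₀
      _ ≤ (q ^ 2) ^ (Us.length + 1) * 2 ^ n := by
          rw [hσ.pauliNormSq_of_pure hherm hρ₀psd.1 hρ₀tr hρ₀pure]
          gcongr
          simp
      _ = _ := by ring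
  have hterm (i) : ‖(σ i * runCircuit Nc Us ρ₀).trace‖ ≤ √(2 ^ n) * q ^ (Us.length + 1) :=
    calc _ ≤ √(pauliNormSq σ (runCircuit Nc Us ρ₀)) := norm_trace_mul_le_sqrt_pauliNormSq σ _ i
      _ ≤ √((q ^ (Us.length + 1)) ^ 2 * 2 ^ n) := Real.sqrt_le_sqrt hout
      _ = _ := by rw [Real.sqrt_mul (by positivity), Real.sqrt_sq (by positivity), mul_comm]
  have hOtr : O.trace = 0 := by simp [hO, Matrix.trace_sum, Matrix.trace_smul, htraceless]
  have hOρ : (O * runCircuit Nc Us ρ₀).trace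
      = ∑ i, (ω i : ℂ) * (σ i * runCircuit Nc Us ρ₀).trace := by
    simp [hO, Finset.sum_mul, Matrix.trace_sum, Matrix.trace_smul]
  rw [hOtr, zero_div, sub_zero, hOρ]
  simpa only [mul_assoc] using norm_sum_ofReal_mul_le ω _ hterm

/-- Concentration of the noisy cost: for `L` unitary layers interleaved with
Pauli noise of strength `q` acting on a pure input state, and an observable
`O = Σᵢ ωᵢσᵢ` with `N_O` nonzero Pauli coefficients,
`|C̃ − Tr[O]/2ⁿ| ≤ N_O ‖ω⃗‖∞ 2^{n/2} q^{L+1}`. -/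
theorem stmt_7 {n : ℕ} {ι : Type*} [Fintype ι] [DecidableEq ι]
    (hcard : Fintype.card ι = 4^n - 1)
    (σ : ι → Matrix (Fin (2^n)) (Fin (2^n)) ℂ)
    (hherm : ∀ i, (σ i).IsHermitian)
    (htraceless : ∀ i, (σ i).trace = 0)
    (horth : ∀ i j, (σ i * σ j).trace = if i = j then ((2^n : ℕ) : ℂ) else 0)
    (q : ℝ) (hq0 : 0 ≤ q) (hq1 : q < 1)
    (Nc : Matrix (Fin (2^n)) (Fin (2^n)) ℂ →ₗ[ℂ] Matrix (Fin (2^n)) (Fin (2^n)) ℂ)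
    (c : ι → ℝ) (hN1 : Nc 1 = 1) (hNσ : ∀ i, Nc (σ i) = (c i : ℂ) • σ i)
    (hc : ∀ i, |c i| ≤ q)
    (Us : List (Matrix (Fin (2^n)) (Fin (2^n)) ℂ))
    (hUs : ∀ V ∈ Us, V ∈ Matrix.unitaryGroup (Fin (2^n)) ℂ)
    (ρ₀ : Matrix (Fin (2^n)) (Fin (2^n)) ℂ)
    (hρ₀psd : ρ₀.PosSemidef) (hρ₀tr : ρ₀.trace = 1)
    (hρ₀pure : (ρ₀ * ρ₀).trace = 1)
    (ω : ι → ℝ) (O : Matrix (Fin (2^n)) (Fin (2^n)) ℂ)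
    (hO : O = ∑ i, (ω i : ℂ) • σ i) :
    ‖(O * runCircuit Nc Us ρ₀).trace - O.trace / ((2^n : ℕ) : ℂ)‖
      ≤ ((Finset.univ.filter (fun i => ω i ≠ 0)).card : ℝ)
        * (⨆ i, |ω i|) * Real.sqrt (2^n) * q ^ (Us.length + 1) :=
  stmt_7_general hcard σ hherm htraceless horth q hq0 Nc c hN1 hNσ hc Us hUs ρ₀ hρ₀psd hρ₀tr hρ₀pure
    ω O hO
end
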